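/- arXiv:1104.3770 — 3 statements merged into one kernel-verified Lean document; each statement's English description precedes it below -/
import Mathlib

section
/- For any point x in R^D and any two d-dimensional linear subspaces L1, L2 of R^D, the absolute difference of the distances from x to L1 and to L2 is at most the norm of x times the Grassmannian distance between L1 and L2, where the Grassmannian distance is the square root of the sum of squares of the principal angles between L1 and L2. -/
open scoped RealInnerProductSpace
noncomputable section

abbrev E (D : ℕ) := EuclideanSpace ℝ (Fin D)

/-- projection onto `L` as an endomorphism of `E D` -/
def projL {D : ℕ} (L : Submodule ℝ (E D)) : E D →ₗ[ℝ] E D :=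
  L.subtype ∘ₗ L.orthogonalProjectionOnto.toLinearMap

/-- projection matrix of `L` -/
def projMat {D : ℕ} (L : Submodule ℝ (E D)) : Matrix (Fin D) (Fin D) ℝ :=
  LinearMap.toMatrix (EuclideanSpace.basisFun (Fin D) ℝ).toBasis
    (EuclideanSpace.basisFun (Fin D) ℝ).toBasis (projL L)

/-- eigenvalues of a matrix (0 if not Hermitian) -/
def eigs {D : ℕ} (M : Matrix (Fin D) (Fin D) ℝ) : Fin D → ℝ :=
  if h : M.IsHermitian then h.eigenvalues else 0

/-- the Grassmannian distance: the square root of the sum of the squares of the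
principal angles between two `d`-dimensional subspaces.  The eigenvalues of
`P_F P_G P_F` are the `d` values `cos² θ_i` together with `D - d` zeros, so
`∑ arccos(√λ_i)² = ∑ θ_i² + (D-d)(π/2)²`. -/
def dG {D : ℕ} (d : ℕ) (F G : Submodule ℝ (E D)) : ℝ :=
  Real.sqrt (∑ i, (Real.arccos (Real.sqrt (eigs (projMat F * projMat G * projMat F) i))) ^ 2
    - (D - d : ℝ) * (Real.pi / 2) ^ 2)

/-!
Write `P₁, P₂` for the orthogonal projections onto `L₁, L₂`. Since `P₁ P₂ x ∈ L₁`,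
`dist(x, L₁) ≤ ‖x - P₁ P₂ x‖ ≤ dist(x, L₂) + ‖(1 - P₁) P₂ x‖`, and symmetrically. The operator
norm of `(1 - P₁) P₂` is bounded by its Frobenius norm, whose square is
`tr P₂ - tr (P₁ P₂) = d - ∑ λᵢ`, where the `λᵢ = cos² θᵢ` are the eigenvalues on `L₁` of
`P₁ P₂ P₁`, and `1 - cos² θ = sin² θ ≤ θ²`.
-/

namespace Submodule

variable {F : Type*} [NormedAddCommGroup F] [InnerProductSpace ℝ F]
  (K K' : Submodule ℝ F) [K.HasOrthogonalProjection] [K'.HasOrthogonalProjection]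

theorem infDist_eq_norm_sub_starProjection (x : F) :
    Metric.infDist x K = ‖x - K.starProjection x‖ := by
  rw [starProjection_minimal, Metric.infDist_eq_iInf]
  simp [dist_eq_norm]

theorem infDist_le_infDist_add_norm_sub_starProjection (x : F) :
    Metric.infDist x K ≤
      Metric.infDist x K' + ‖K'.starProjection x - K.starProjection (K'.starProjection x)‖ := by
  rw [infDist_eq_norm_sub_starProjection K']
  calc Metric.infDist x K ≤ dist x (K.starProjection (K'.starProjection x)) :=
        Metric.infDist_le_dist_of_mem (K.starProjection_apply_mem _)
    _ ≤ _ := by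
        rw [dist_eq_norm]
        exact norm_sub_le_norm_sub_add_norm_sub _ _ _

theorem norm_starProjection_sq_eq_inner (v : F) :
    ‖K.starProjection v‖ ^ 2 = ⟪v, K.starProjection v⟫ := by
  simpa [real_inner_comm] using (K.re_inner_starProjection_eq_normSq v).symm

theorem norm_sub_starProjection_sq (v : F) :
    ‖v - K.starProjection v‖ ^ 2 = ‖v‖ ^ 2 - ‖K.starProjection v‖ ^ 2 := by
  rw [K.norm_sq_eq_add_norm_sq_starProjection v, starProjection_orthogonal_val]
  ring

variable [FiniteDimensional ℝ F]

theorem trace_starProjection :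
    LinearMap.trace ℝ F K.starProjection = Module.finrank ℝ K :=
  LinearMap.IsProj.trace
    ⟨K.starProjection_apply_mem, fun _ hx => K.starProjection_eq_self_iff.mpr hx⟩

theorem trace_starProjection_comp_comp :
    LinearMap.trace ℝ F (K'.starProjection ∘L K.starProjection ∘L K'.starProjection) =
      LinearMap.trace ℝ F (K.starProjection ∘L K'.starProjection) := by
  rw [ContinuousLinearMap.toLinearMap_comp, LinearMap.trace_comp_comm',
    ← ContinuousLinearMap.toLinearMap_comp, ContinuousLinearMap.comp_assoc,
    ← ContinuousLinearMap.mul_def K'.starProjection, K'.isIdempotentElem_starProjection.eq]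

theorem sum_norm_sub_starProjection_comp_sq {ι : Type*} [Fintype ι]
    (b : OrthonormalBasis ι ℝ F) :
    ∑ i, ‖K'.starProjection (b i) - K.starProjection (K'.starProjection (b i))‖ ^ 2 =
      Module.finrank ℝ K' - LinearMap.trace ℝ F (K.starProjection ∘L K'.starProjection) := by
  have hterm (v : F) : ‖K'.starProjection v - K.starProjection (K'.starProjection v)‖ ^ 2 =
      ⟪v, K'.starProjection v⟫ -
        ⟪v, (K'.starProjection ∘L K.starProjection ∘L K'.starProjection) v⟫ := by
    rw [norm_sub_starProjection_sq, norm_starProjection_sq_eq_inner,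
      norm_starProjection_sq_eq_inner, K'.inner_starProjection_left_eq_right]
    rfl
  rw [← trace_starProjection, ← trace_starProjection_comp_comp, LinearMap.trace_eq_sum_inner _ b,
    LinearMap.trace_eq_sum_inner _ b, ← Finset.sum_sub_distrib]
  exact Finset.sum_congr rfl fun i _ => hterm (b i)

end Submodule

theorem OrthonormalBasis.norm_apply_le_of_sum_norm_sq_le {ι F G : Type*} [Fintype ι]
    [NormedAddCommGroup F] [InnerProductSpace ℝ F] [SeminormedAddCommGroup G] [NormedSpace ℝ G]
    (b : OrthonormalBasis ι ℝ F) (T : F →ₗ[ℝ] G) {c : ℝ} (hc : 0 ≤ c)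
    (hT : ∑ i, ‖T (b i)‖ ^ 2 ≤ c ^ 2) (x : F) : ‖T x‖ ≤ ‖x‖ * c := by
  have hsum : ‖T x‖ ≤ ∑ i, |⟪b i, x⟫| * ‖T (b i)‖ := by
    conv_lhs => rw [← b.sum_repr' x, map_sum]
    refine (norm_sum_le _ _).trans (le_of_eq ?_)
    simp only [map_smul, norm_smul, Real.norm_eq_abs]
  have hcs : (∑ i, |⟪b i, x⟫| * ‖T (b i)‖) ^ 2 ≤ (‖x‖ * c) ^ 2 := by
    calc _ ≤ (∑ i, |⟪b i, x⟫| ^ 2) * ∑ i, ‖T (b i)‖ ^ 2 := Finset.sum_mul_sq_le_sq_mul_sq _ _ _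
      _ ≤ (‖x‖ * c) ^ 2 := by
        rw [mul_pow]
        simp only [sq_abs, b.sum_sq_inner_right]
        gcongr
  exact hsum.trans (pow_le_pow_iff_left₀ (by positivity) (by positivity) two_ne_zero |>.mp hcs)

theorem Real.one_sub_le_arccos_sqrt_sq {t : ℝ} (ht : 0 ≤ t) : 1 - t ≤ arccos √t ^ 2 := by
  rcases le_or_gt 1 t with h | h
  · nlinarith [sq_nonneg (arccos √t)]
  · calc 1 - t = sin (arccos √t) ^ 2 := by rw [sin_arccos, sq_sqrt ht, sq_sqrt (by linarith)]
      _ ≤ arccos √t ^ 2 := by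
        gcongr
        · exact sin_nonneg_of_nonneg_of_le_pi (arccos_nonneg _) (arccos_le_pi _)
        · exact sin_le (arccos_nonneg _)

open Finset Real in
theorem sub_sum_le_sum_arccos_sqrt_sq {ι : Type*} [Fintype ι] (d : ℕ) (lam : ι → ℝ)
    (hlam : ∀ i, 0 ≤ lam i) (hcard : #{i | lam i ≠ 0} ≤ d) :
    d - ∑ i, lam i ≤ ∑ i, arccos √(lam i) ^ 2 - (Fintype.card ι - d) * (π / 2) ^ 2 := by
  set Z : Finset ι := {i | lam i = 0}
  have hZ : (Fintype.card ι : ℝ) - d ≤ #Z := by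
    have hsplit : (#Z : ℝ) + #{i | lam i ≠ 0} = Fintype.card ι := by
      exact_mod_cast card_filter_add_card_filter_not (s := univ) (fun i => lam i = 0)
    have : (#{i | lam i ≠ 0} : ℝ) ≤ d := by exact_mod_cast hcard
    linarith
  have hgap (i : ι) : 0 ≤ arccos √(lam i) ^ 2 - (1 - lam i) :=
    sub_nonneg.mpr (one_sub_le_arccos_sqrt_sq (hlam i))
  have hZgap : (#Z : ℝ) * ((π / 2) ^ 2 - 1) ≤ ∑ i, (arccos √(lam i) ^ 2 - (1 - lam i)) := by
    calc (#Z : ℝ) * ((π / 2) ^ 2 - 1) = ∑ i ∈ Z, (arccos √(lam i) ^ 2 - (1 - lam i)) := by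
          rw [sum_congr rfl fun i hi => by
              rw [(mem_filter.mp hi).2, sqrt_zero, arccos_zero, sub_zero],
            sum_const, nsmul_eq_mul]
      _ ≤ _ := sum_le_sum_of_subset_of_nonneg (subset_univ _) fun i _ _ => hgap i
  have hpi : 1 ≤ (π / 2) ^ 2 := by nlinarith [pi_gt_three]
  have := mul_le_mul_of_nonneg_right hZ (sub_nonneg.mpr hpi)
  simp only [sum_sub_distrib, sum_const, card_univ, nsmul_eq_mul, mul_one] at hZgap
  linarith

section Grassmannian

variable {D : ℕ}

theorem projL_eq_starProjection (L : Submodule ℝ (E D)) : projL L = L.starProjection := rfl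

theorem projMat_mul_projMat_mul_projMat_eq_toMatrix (F G : Submodule ℝ (E D)) :
    projMat F * projMat G * projMat F =
      LinearMap.toMatrix (EuclideanSpace.basisFun (Fin D) ℝ).toBasis
        (EuclideanSpace.basisFun (Fin D) ℝ).toBasis
        (F.starProjection ∘L G.starProjection ∘L F.starProjection) := by
  simp only [projMat, projL_eq_starProjection, ContinuousLinearMap.toLinearMap_comp,
    LinearMap.toMatrix_comp _ (EuclideanSpace.basisFun (Fin D) ℝ).toBasis, mul_assoc]

theorem posSemidef_projMat_mul_projMat_mul_projMat (F G : Submodule ℝ (E D)) :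
    (projMat F * projMat G * projMat F).PosSemidef := by
  rw [projMat_mul_projMat_mul_projMat_eq_toMatrix, LinearMap.posSemidef_toMatrix_iff]
  exact ContinuousLinearMap.IsPositive.conj_starProjection F
    G.isSymmetricProjection_starProjection.isPositive

theorem rank_projMat_mul_projMat_mul_projMat_le (F G : Submodule ℝ (E D)) :
    (projMat F * projMat G * projMat F).rank ≤ Module.finrank ℝ F := by
  rw [projMat_mul_projMat_mul_projMat_eq_toMatrix, Matrix.rank_eq_finrank_range_toLin _
    (EuclideanSpace.basisFun (Fin D) ℝ).toBasis (EuclideanSpace.basisFun (Fin D) ℝ).toBasis,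
    Matrix.toLin_toMatrix]
  calc _ ≤ Module.finrank ℝ (LinearMap.range (F.starProjection : E D →ₗ[ℝ] E D)) :=
        Submodule.finrank_mono (LinearMap.range_comp_le_range _ _)
    _ = Module.finrank ℝ F := by rw [Submodule.range_starProjection]

open Finset in
theorem finrank_sub_trace_le_dG_sq {d : ℕ} {F G : Submodule ℝ (E D)}
    (hF : Module.finrank ℝ F = d) :
    d - LinearMap.trace ℝ (E D) (G.starProjection ∘L F.starProjection) ≤ dG d F G ^ 2 := by
  have hA := posSemidef_projMat_mul_projMat_mul_projMat F G
  have htrace : LinearMap.trace ℝ (E D) (G.starProjection ∘L F.starProjection) =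
      ∑ i, hA.isHermitian.eigenvalues i := by
    rw [← Submodule.trace_starProjection_comp_comp,
      LinearMap.trace_eq_matrix_trace ℝ (EuclideanSpace.basisFun (Fin D) ℝ).toBasis,
      ← projMat_mul_projMat_mul_projMat_eq_toMatrix, hA.isHermitian.trace_eq_sum_eigenvalues]
    simp
  have hcard : #{i | hA.isHermitian.eigenvalues i ≠ 0} ≤ d := by
    rw [← Fintype.card_subtype, ← hA.isHermitian.rank_eq_card_non_zero_eigs, ← hF]
    exact rank_projMat_mul_projMat_mul_projMat_le F G
  rw [dG, Real.sq_sqrt', eigs, dif_pos hA.isHermitian, htrace]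
  refine le_max_of_le_left ?_
  simpa using sub_sum_le_sum_arccos_sqrt_sq d _ hA.eigenvalues_nonneg hcard

theorem norm_sub_starProjection_starProjection_le_mul_dG {d : ℕ} {F G : Submodule ℝ (E D)}
    (hF : Module.finrank ℝ F = d) (x : E D) :
    ‖F.starProjection x - G.starProjection (F.starProjection x)‖ ≤ ‖x‖ * dG d F G := by
  refine (EuclideanSpace.basisFun (Fin D) ℝ).norm_apply_le_of_sum_norm_sq_le
    ((F.starProjection - G.starProjection ∘L F.starProjection : E D →L[ℝ] E D) : E D →ₗ[ℝ] E D)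
    (Real.sqrt_nonneg _) ?_ x
  have hsum := G.sum_norm_sub_starProjection_comp_sq F (EuclideanSpace.basisFun (Fin D) ℝ)
  rw [hF] at hsum
  exact hsum.trans_le (finrank_sub_trace_le_dG_sq hF)

theorem norm_sub_starProjection_starProjection_le_mul_dG' {d : ℕ} {F G : Submodule ℝ (E D)}
    (hF : Module.finrank ℝ F = d) (hG : Module.finrank ℝ G = d) (x : E D) :
    ‖G.starProjection x - F.starProjection (G.starProjection x)‖ ≤ ‖x‖ * dG d F G := by
  refine (EuclideanSpace.basisFun (Fin D) ℝ).norm_apply_le_of_sum_norm_sq_le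
    ((G.starProjection - F.starProjection ∘L G.starProjection : E D →L[ℝ] E D) : E D →ₗ[ℝ] E D)
    (Real.sqrt_nonneg _) ?_ x
  have hsum := F.sum_norm_sub_starProjection_comp_sq G (EuclideanSpace.basisFun (Fin D) ℝ)
  rw [hG, ContinuousLinearMap.toLinearMap_comp, LinearMap.trace_comp_comm',
    ← ContinuousLinearMap.toLinearMap_comp] at hsum
  exact hsum.trans_le (finrank_sub_trace_le_dG_sq hF)

end Grassmannian

theorem dist_diff_le_norm_mul_dG_general
    (D d : ℕ)
    (L₁ L₂ : Submodule ℝ (E D))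
    (h₁ : Module.finrank ℝ L₁ = d) (h₂ : Module.finrank ℝ L₂ = d)
    (x : E D) :
    |Metric.infDist x (L₁ : Set (E D)) - Metric.infDist x (L₂ : Set (E D))|
      ≤ ‖x‖ * dG d L₁ L₂ := by
  rw [abs_sub_le_iff, sub_le_iff_le_add', sub_le_iff_le_add']
  exact ⟨(L₁.infDist_le_infDist_add_norm_sub_starProjection L₂ x).trans
      (by grw [norm_sub_starProjection_starProjection_le_mul_dG' h₁ h₂]),
    (L₂.infDist_le_infDist_add_norm_sub_starProjection L₁ x).trans
      (by grw [norm_sub_starProjection_starProjection_le_mul_dG h₁])⟩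

/-- for any `x ∈ ℝ^D` and `d`-dimensional subspaces `L₁, L₂`,
`|dist(x,L₁) - dist(x,L₂)| ≤ ‖x‖ ⬝ d_G(L₁,L₂)`. -/
theorem dist_diff_le_norm_mul_dG
    (D d : ℕ) (hd : 0 < d) (hdD : d < D)
    (L₁ L₂ : Submodule ℝ (E D))
    (h₁ : Module.finrank ℝ L₁ = d) (h₂ : Module.finrank ℝ L₂ = d)
    (x : E D) :
    |Metric.infDist x (L₁ : Set (E D)) - Metric.infDist x (L₂ : Set (E D))|
      ≤ ‖x‖ * dG d L₁ L₂ :=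
  dist_diff_le_norm_mul_dG_general D d L₁ L₂ h₁ h₂ x
end
end

section
/- Let h : H^K → R be a convex function on the K-fold product of a convex set H (in a real vector space), invariant under permutations of its K coordinates. Let g map H onto the Grassmannian G(D,d). Suppose the set of minimizers of h equals the set of all permutations of (x_1,...,x_K) where x_i ∈ g^{-1}(L_i*) for distinct subspaces L_1*,...,L_K* with K > 1. Then a contradiction follows; i.e., no such convex h exists when the subspaces L_i* are not all equal. -/
noncomputable section

/-- there is no permutation-invariant convex function `h` on `H^K`
whose set of minimizers is exactly the set of permutations of preimages (under a
map `g` of `H` onto the Grassmannian) of `K > 1` distinct `d`-subspaces. -/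
theorem no_convex_recovery_of_multiple_subspaces
    (D d K : ℕ) (hK : 1 < K)
    (V : Type*) [AddCommGroup V] [Module ℝ V]
    (s : Set V) (hs : Convex ℝ s)
    (h : (Fin K → V) → ℝ)
    (hconv : ConvexOn ℝ {f : Fin K → V | ∀ i, f i ∈ s} h)
    (hsymm : ∀ (σ : Equiv.Perm (Fin K)) (f : Fin K → V),
      h (f ∘ σ) = h f)
    (g : V → Submodule ℝ (E D))
    (hgsurj : ∀ L : Submodule ℝ (E D), Module.finrank ℝ L = d → ∃ x ∈ s, g x = L)
    (Lstar : Fin K → Submodule ℝ (E D))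
    (hLd : ∀ i, Module.finrank ℝ (Lstar i) = d)
    (hdistinct : Function.Injective Lstar)
    (hminimizers : ∀ f : Fin K → V, (∀ i, f i ∈ s) →
      ((∀ f' : Fin K → V, (∀ i, f' i ∈ s) → h f ≤ h f') ↔
        ∃ σ : Equiv.Perm (Fin K), ∀ i, g (f i) = Lstar (σ i))) :
    False := by
  -- choose x i ∈ s with g (x i) = Lstar i
  choose x hxs hgx using fun i => hgsurj (Lstar i) (hLd i)
  have hxmem : ∀ i, x i ∈ s := hxs
  -- x is a minimizer
  have hxmin : ∀ f' : Fin K → V, (∀ i, f' i ∈ s) → h x ≤ h f' := by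
    exact (hminimizers x hxmem).mpr ⟨Equiv.refl _, fun i => hgx i⟩
  -- two distinct indices
  have h0 : (0 : ℕ) < K := by omega
  set i0 : Fin K := ⟨0, h0⟩
  set i1 : Fin K := ⟨1, hK⟩
  have hne : i0 ≠ i1 := by simp [i0, i1, Fin.ext_iff]
  set σ : Equiv.Perm (Fin K) := Equiv.swap i0 i1
  set y : Fin K → V := x ∘ σ with hy
  have hymem : ∀ i, y i ∈ s := fun i => hxmem _
  -- midpoint
  set m : Fin K → V := (1/2 : ℝ) • x + (1/2 : ℝ) • y with hm
  have hmmem : ∀ i, m i ∈ s := by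
    intro i
    exact hs (hxmem i) (hymem i) (by norm_num) (by norm_num) (by norm_num)
  have hxset : x ∈ {f : Fin K → V | ∀ i, f i ∈ s} := hxmem
  have hyset : y ∈ {f : Fin K → V | ∀ i, f i ∈ s} := hymem
  have hconvle : h m ≤ (1/2 : ℝ) * h x + (1/2 : ℝ) * h y :=
    hconv.2 hxset hyset (by norm_num) (by norm_num) (by norm_num)
  have hyval : h y = h x := hsymm σ x
  have hmle : h m ≤ h x := by rw [hyval] at hconvle; linarith
  have hmmin : ∀ f' : Fin K → V, (∀ i, f' i ∈ s) → h m ≤ h f' := by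
    intro f' hf'
    exact hmle.trans (hxmin f' hf')
  obtain ⟨τ, hτ⟩ := (hminimizers m hmmem).mp hmmin
  have hmeq : m i0 = m i1 := by
    simp only [hm, hy, Pi.add_apply, Pi.smul_apply, Function.comp_apply, σ,
      Equiv.swap_apply_left, Equiv.swap_apply_right]
    abel
  have : τ i0 = τ i1 := hdistinct (by rw [← hτ i0, ← hτ i1, hmeq])
  exact hne (τ.injective this)
end
end

section
/- Let L_1*, L_2*, L̂_2 be d-dimensional subspaces of R^D and t a real number such that P_{L̂_2} = (1 − t) P_{L_1*} + t P_{L_2*}. If t < 1, then L̂_2 = L_1* (hence L_1* = L_2* when t ≠ 0 forces further collapse); if t ≥ 1, then L̂_2 = L_2*. In particular, if L_1* ≠ L_2* and L̂_2 ∉ {L_1*, L_2*}, no such t exists. -/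
/-!
With `q_L v = ⟪P_L v, v⟫ = ‖P_L v‖²`, the hypothesis gives `q_L̂ = (1 - t) q_L₁ + t q_L₂`.
For `t ≤ 0` a vector of `L₁ᗮ` has `‖P_L̂ v‖² = t ‖P_L₂ v‖² ≤ 0`, so `L₁ᗮ ≤ L̂ᗮ`; for `0 ≤ t < 1`
a vector of `L̂ᗮ` has `0 = (1 - t) ‖P_L₁ v‖² + t ‖P_L₂ v‖²`, so `L̂ᗮ ≤ L₁ᗮ`. Since `P_Lᗮ = 1 - P_L`,
the same relation holds between the orthogonal complements, which yields the reverse inclusions.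
The case `t ≥ 1` is the case `1 - t ≤ 0` with `L₁` and `L₂` exchanged.
-/

open scoped RealInnerProductSpace
noncomputable section

namespace Submodule

variable {V : Type*} [NormedAddCommGroup V] [InnerProductSpace ℝ V]

lemma inner_starProjection_self_eq_norm_sq (K : Submodule ℝ V) [K.HasOrthogonalProjection]
    (v : V) : ⟪K.starProjection v, v⟫ = ‖K.starProjection v‖ ^ 2 := by
  simpa using K.re_inner_starProjection_eq_normSq v

variable {K K₁ K₂ : Submodule ℝ V} [K.HasOrthogonalProjection] [K₁.HasOrthogonalProjection]
  [K₂.HasOrthogonalProjection] {t : ℝ}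

lemma norm_sq_starProjection_eq_of_starProjection_eq
    (h : K.starProjection = (1 - t) • K₁.starProjection + t • K₂.starProjection) (v : V) :
    ‖K.starProjection v‖ ^ 2 =
      (1 - t) * ‖K₁.starProjection v‖ ^ 2 + t * ‖K₂.starProjection v‖ ^ 2 := by
  simp only [← inner_starProjection_self_eq_norm_sq]
  rw [h, add_apply, smul_apply, smul_apply, inner_add_left, real_inner_smul_left,
    real_inner_smul_left]

lemma orthogonal_starProjection_eq_of_starProjection_eq
    (h : K.starProjection = (1 - t) • K₁.starProjection + t • K₂.starProjection) :
    Kᗮ.starProjection = (1 - t) • K₁ᗮ.starProjection + t • K₂ᗮ.starProjection := by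
  simp only [starProjection_orthogonal', h, smul_sub]
  module

lemma le_of_starProjection_eq_of_nonpos
    (h : K.starProjection = (1 - t) • K₁.starProjection + t • K₂.starProjection) (ht : t ≤ 0) :
    K ≤ K₁ := by
  refine orthogonal_le_orthogonal_iff.mp fun v hv => ?_
  rw [← starProjection_apply_eq_zero_iff] at hv ⊢
  have hnorm := norm_sq_starProjection_eq_of_starProjection_eq h v
  rw [hv, norm_zero] at hnorm
  have : ‖K.starProjection v‖ ^ 2 ≤ 0 := by
    nlinarith [sq_nonneg ‖K₂.starProjection v‖]
  simpa using this

lemma le_of_starProjection_eq_of_nonneg_of_lt_one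
    (h : K.starProjection = (1 - t) • K₁.starProjection + t • K₂.starProjection) (ht₀ : 0 ≤ t)
    (ht₁ : t < 1) : K₁ ≤ K := by
  refine orthogonal_le_orthogonal_iff.mp fun v hv => ?_
  rw [← starProjection_apply_eq_zero_iff] at hv ⊢
  have hnorm := norm_sq_starProjection_eq_of_starProjection_eq h v
  rw [hv, norm_zero] at hnorm
  have : ‖K₁.starProjection v‖ ^ 2 ≤ 0 := by
    nlinarith [sq_nonneg ‖K₁.starProjection v‖, sq_nonneg ‖K₂.starProjection v‖]
  simpa using this

theorem eq_of_starProjection_eq_of_lt_one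
    (h : K.starProjection = (1 - t) • K₁.starProjection + t • K₂.starProjection) (ht : t < 1) :
    K = K₁ := by
  have hcompl := orthogonal_starProjection_eq_of_starProjection_eq h
  rcases le_or_gt t 0 with ht₀ | ht₀
  · exact le_antisymm (le_of_starProjection_eq_of_nonpos h ht₀)
      (orthogonal_le_orthogonal_iff.mp (le_of_starProjection_eq_of_nonpos hcompl ht₀))
  · exact le_antisymm (orthogonal_le_orthogonal_iff.mp
        (le_of_starProjection_eq_of_nonneg_of_lt_one hcompl ht₀.le ht))
      (le_of_starProjection_eq_of_nonneg_of_lt_one h ht₀.le ht)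

theorem eq_of_starProjection_eq_of_one_le
    (h : K.starProjection = (1 - t) • K₁.starProjection + t • K₂.starProjection) (ht : 1 ≤ t) :
    K = K₂ := by
  refine eq_of_starProjection_eq_of_lt_one (K₂ := K₁) (t := 1 - t) ?_ (by linarith)
  rw [h, sub_sub_cancel, add_comm]

end Submodule

lemma starProjection_eq_of_projMat_eq {D : ℕ} {L₁ L₂ L : Submodule ℝ (E D)} {t : ℝ}
    (h : projMat L = (1 - t) • projMat L₁ + t • projMat L₂) :
    L.starProjection = (1 - t) • L₁.starProjection + t • L₂.starProjection := by
  apply ContinuousLinearMap.coe_injective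
  apply (LinearMap.toMatrix (EuclideanSpace.basisFun (Fin D) ℝ).toBasis
    (EuclideanSpace.basisFun (Fin D) ℝ).toBasis).injective
  rw [ContinuousLinearMap.toLinearMap_add, ContinuousLinearMap.toLinearMap_smul,
    ContinuousLinearMap.toLinearMap_smul, map_add, map_smul, map_smul]
  exact h

theorem proj_convex_combination_collapse_general
    (D : ℕ)
    (L₁ L₂ Lhat : Submodule ℝ (E D))
    (t : ℝ)
    (hcomb : projMat Lhat = (1 - t) • projMat L₁ + t • projMat L₂) :
    ((t < 1 → Lhat = L₁) ∧ (1 ≤ t → Lhat = L₂)) ∧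
    (L₁ ≠ L₂ → Lhat ≠ L₁ → Lhat ≠ L₂ → False) := by
  have h := starProjection_eq_of_projMat_eq hcomb
  have hlt := Submodule.eq_of_starProjection_eq_of_lt_one h
  have hge := Submodule.eq_of_starProjection_eq_of_one_le h
  refine ⟨⟨hlt, hge⟩, fun _ hne₁ hne₂ => ?_⟩
  rcases lt_or_ge t 1 with ht | ht
  · exact hne₁ (hlt ht)
  · exact hne₂ (hge ht)

/-- if `P_{L̂₂} = (1-t) P_{L₁*} + t P_{L₂*}` then `t < 1` forces
`L̂₂ = L₁*` and `t ≥ 1` forces `L̂₂ = L₂*`; in particular no such `t` exists when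
`L₁* ≠ L₂*` and `L̂₂ ∉ {L₁*, L₂*}`. -/
theorem proj_convex_combination_collapse
    (D d : ℕ) (hd : 0 < d) (hdD : d < D)
    (L₁ L₂ Lhat : Submodule ℝ (E D))
    (h₁ : Module.finrank ℝ L₁ = d) (h₂ : Module.finrank ℝ L₂ = d)
    (hhat : Module.finrank ℝ Lhat = d)
    (t : ℝ)
    (hcomb : projMat Lhat = (1 - t) • projMat L₁ + t • projMat L₂) :
    ((t < 1 → Lhat = L₁) ∧ (1 ≤ t → Lhat = L₂)) ∧
    (L₁ ≠ L₂ → Lhat ≠ L₁ → Lhat ≠ L₂ → False) :=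
  proj_convex_combination_collapse_general D L₁ L₂ Lhat t hcomb
end
end
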